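/- arXiv:2407.09692 — 3 statements merged into one kernel-verified Lean document; each statement's English description precedes it below -/
import Mathlib

section
/- For every integer k ≥ 3, the reduced subdivided star T_k* (obtained from the subdivided star T_k by removing exactly one leaf), which has order n = 2k, satisfies γ^IOC(T_k*) = 2k−1 = ((2k−1)/(2k))·n. -/
/-!
Write `c` for the centre, `s i` for the support vertices and `ℓ i` for the leaves, `ℓ 0` being
the removed leaf. An identifying open code `S` contains `c`, the only neighbour of `s 0`; each
`s i` with `i ≠ 0`, the only neighbour of `ℓ i`; and each `ℓ i` with `i ≠ 0`, since the
neighbourhoods of `s 0` and `s i` differ only in `ℓ i`. So `S` misses at most `s 0`. Conversely,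
for `k ≥ 3` all vertices but `s 0` form an identifying open code: the centre then sees two
support vertices of the code, which separates it from every leaf.
-/

/-- `S` is an identifying open code of `G`: a total dominating set that is also a
separating open code. -/
def IsIOC {V : Type*} (G : SimpleGraph V) (S : Set V) : Prop :=
  (∀ v : V, ∃ u ∈ S, G.Adj v u) ∧
  ∀ u v : V, u ≠ v → G.neighborSet u ∩ S ≠ G.neighborSet v ∩ S

/-- The identifying open code number `γ^IOC(G)`. -/
noncomputable def iocNumber {V : Type*} [Fintype V] (G : SimpleGraph V) : ℕ :=
  sInf {n | ∃ S : Finset V, IsIOC G ↑S ∧ S.card = n}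

/-- The subdivided star `T_k`: the star `K_{1,k}` with every edge subdivided once.
`none` is the center, `some (i, false)` the support vertices, `some (i, true)` the leaves. -/
def subdividedStar (k : ℕ) : SimpleGraph (Option (Fin k × Bool)) :=
  SimpleGraph.fromRel (fun a b =>
    (a = none ∧ ∃ i, b = some (i, false)) ∨
    (∃ i, a = some (i, false) ∧ b = some (i, true)))

section IdentifyingOpenCode

variable {V : Type*} {G : SimpleGraph V} {S : Set V} {u v w : V}

lemma neighborSet_inter_ne_of_adj_of_not_adj (hw : w ∈ S) (hu : G.Adj u w) (hv : ¬ G.Adj v w) :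
    G.neighborSet u ∩ S ≠ G.neighborSet v ∩ S := fun h =>
  hv (h ▸ (⟨hu, hw⟩ : w ∈ G.neighborSet u ∩ S) : w ∈ G.neighborSet v ∩ S).1

lemma IsIOC.mem_of_neighborSet_subset (h : IsIOC G S) (hv : G.neighborSet v ⊆ {u}) : u ∈ S := by
  obtain ⟨x, hxS, hvx⟩ := h.1 v
  rwa [← Set.mem_singleton_iff.mp (hv hvx)]

lemma IsIOC.mem_of_neighborSet_eq_insert (h : IsIOC G S) (huv : u ≠ v)
    (hN : G.neighborSet v = insert w (G.neighborSet u)) : w ∈ S := by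
  by_contra hw
  refine h.2 u v huv ?_
  rw [hN, Set.insert_inter_of_notMem hw]

lemma iocNumber_eq_card [Fintype V] (S : Finset V) (hS : IsIOC G S)
    (hmin : ∀ T : Finset V, IsIOC G T → S.card ≤ T.card) : iocNumber G = S.card := by
  refine le_antisymm (Nat.sInf_le ⟨S, hS, rfl⟩) (le_csInf ⟨_, S, hS, rfl⟩ ?_)
  rintro n ⟨T, hT, rfl⟩
  exact hmin T hT

end IdentifyingOpenCode

section SubdividedStar

variable {k : ℕ} {i j : Fin k} {b c : Bool}

@[simp] lemma subdividedStar_adj_none_some :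
    (subdividedStar k).Adj none (some (i, b)) ↔ b = false := by
  cases b <;> simp [subdividedStar]

@[simp] lemma subdividedStar_adj_some_none :
    (subdividedStar k).Adj (some (i, b)) none ↔ b = false := by
  rw [SimpleGraph.adj_comm, subdividedStar_adj_none_some]

@[simp] lemma subdividedStar_adj_some_some :
    (subdividedStar k).Adj (some (i, b)) (some (j, c)) ↔ i = j ∧ b ≠ c := by
  cases b <;> cases c <;> simp [subdividedStar, eq_comm (a := i)]

lemma card_option_fin_prod_bool_ne (a : Option (Fin k × Bool)) :
    Fintype.card {x // x ≠ a} = 2 * k := by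
  rw [Fintype.card_subtype_compl, Fintype.card_subtype_eq, Fintype.card_option, Fintype.card_prod,
    Fintype.card_fin, Fintype.card_bool, add_tsub_cancel_right, mul_comm]

end SubdividedStar

namespace ReducedSubdividedStar

variable (k : ℕ) [NeZero k]

abbrev vertexSet : Set (Option (Fin k × Bool)) := {x | x ≠ some (0, true)}

abbrev graph : SimpleGraph (vertexSet k) := (subdividedStar k).induce (vertexSet k)

variable {k}

def center : vertexSet k := ⟨none, by simp⟩

def support (i : Fin k) : vertexSet k := ⟨some (i, false), by simp⟩

def leaf (i : Fin k) (hi : i ≠ 0) : vertexSet k := ⟨some (i, true), by simpa using hi⟩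

@[simp] lemma coe_center : (center : vertexSet k).val = none := rfl
@[simp] lemma coe_support (i : Fin k) : (support i).val = some (i, false) := rfl
@[simp] lemma coe_leaf (i : Fin k) (hi : i ≠ 0) : (leaf i hi).val = some (i, true) := rfl

lemma vertex_cases (v : vertexSet k) :
    v = center ∨ (∃ i, v = support i) ∨ ∃ i hi, v = leaf i hi := by
  obtain ⟨_ | ⟨i, _ | _⟩, hv⟩ := v
  · exact .inl rfl
  · exact .inr (.inl ⟨i, rfl⟩)
  · exact .inr (.inr ⟨i, by rintro rfl; exact hv rfl, rfl⟩)

@[simp] lemma support_inj {i j : Fin k} : support i = support j ↔ i = j := by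
  simp [support, Subtype.ext_iff]

@[simp] lemma center_ne_support (i : Fin k) : center ≠ support i := by
  simp [center, support, Subtype.ext_iff]

@[simp] lemma support_ne_center (i : Fin k) : support i ≠ center := (center_ne_support i).symm

@[simp] lemma center_ne_leaf (i : Fin k) (hi : i ≠ 0) : center ≠ leaf i hi := by
  simp [center, leaf, Subtype.ext_iff]

@[simp] lemma leaf_ne_center (i : Fin k) (hi : i ≠ 0) : leaf i hi ≠ center :=
  (center_ne_leaf i hi).symm

@[simp] lemma support_ne_leaf (i j : Fin k) (hj : j ≠ 0) : support i ≠ leaf j hj := by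
  simp [support, leaf, Subtype.ext_iff]

@[simp] lemma leaf_ne_support (i j : Fin k) (hi : i ≠ 0) : leaf i hi ≠ support j :=
  (support_ne_leaf j i hi).symm

@[simp] lemma leaf_inj {i j : Fin k} (hi : i ≠ 0) (hj : j ≠ 0) :
    leaf i hi = leaf j hj ↔ i = j := by
  simp [leaf, Subtype.ext_iff]

lemma neighborSet_support_zero : (graph k).neighborSet (support 0) = {center} := by
  ext v
  rcases vertex_cases v with rfl | ⟨i, rfl⟩ | ⟨i, hi, rfl⟩ <;> simp [eq_comm, *]

lemma neighborSet_support (i : Fin k) (hi : i ≠ 0) :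
    (graph k).neighborSet (support i) = {leaf i hi, center} := by
  ext v
  rcases vertex_cases v with rfl | ⟨j, rfl⟩ | ⟨j, hj, rfl⟩ <;> simp [eq_comm]

lemma neighborSet_leaf (i : Fin k) (hi : i ≠ 0) :
    (graph k).neighborSet (leaf i hi) = {support i} := by
  ext v
  rcases vertex_cases v with rfl | ⟨j, rfl⟩ | ⟨j, hj, rfl⟩ <;> simp [eq_comm]

lemma compl_support_zero_subset_of_isIOC {S : Set (vertexSet k)} (hS : IsIOC (graph k) S) :
    {support 0}ᶜ ⊆ S := by
  intro v hv
  rcases vertex_cases v with rfl | ⟨i, rfl⟩ | ⟨i, hi, rfl⟩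
  · exact hS.mem_of_neighborSet_subset neighborSet_support_zero.subset
  · exact hS.mem_of_neighborSet_subset (neighborSet_leaf i (by simpa using hv)).subset
  · refine hS.mem_of_neighborSet_eq_insert (u := support 0) (v := support i)
      (by simpa using hi.symm) ?_
    rw [neighborSet_support i hi, neighborSet_support_zero]

lemma exists_ne_zero_ne (hk : 3 ≤ k) (j : Fin k) : ∃ a : Fin k, a ≠ 0 ∧ a ≠ j := by
  by_cases hj : j = ⟨1, by omega⟩
  · exact ⟨⟨2, by omega⟩, by simp [Fin.ext_iff], by simp [hj, Fin.ext_iff]⟩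
  · exact ⟨⟨1, by omega⟩, by simp [Fin.ext_iff], Ne.symm hj⟩

lemma isIOC_compl_support_zero (hk : 3 ≤ k) : IsIOC (graph k) {support 0}ᶜ := by
  refine ⟨fun v => ?_, fun u v huv => ?_⟩
  · rcases vertex_cases v with rfl | ⟨i, rfl⟩ | ⟨i, hi, rfl⟩
    · obtain ⟨a, ha, -⟩ := exists_ne_zero_ne hk 0
      exact ⟨support a, by simpa using ha, by simp⟩
    · exact ⟨center, by simp, by simp⟩
    · exact ⟨support i, by simpa using hi, by simp⟩
  have sep : ∀ {u v} w, w ≠ support 0 → (graph k).Adj u w → ¬ (graph k).Adj v w →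
      (graph k).neighborSet u ∩ {support 0}ᶜ ≠ (graph k).neighborSet v ∩ {support 0}ᶜ :=
    fun _ hw => neighborSet_inter_ne_of_adj_of_not_adj (Set.mem_compl_singleton_iff.mpr hw)
  have center_leaf (j : Fin k) (hj : j ≠ 0) :
      (graph k).neighborSet center ∩ {support 0}ᶜ ≠
        (graph k).neighborSet (leaf j hj) ∩ {support 0}ᶜ := by
    obtain ⟨a, ha0, haj⟩ := exists_ne_zero_ne hk j
    exact sep (support a) (by simpa using ha0) (by simp) (by simpa using haj.symm)
  rcases vertex_cases u with rfl | ⟨i, rfl⟩ | ⟨i, hi, rfl⟩ <;>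
    rcases vertex_cases v with rfl | ⟨j, rfl⟩ | ⟨j, hj, rfl⟩
  · exact absurd rfl huv
  · exact (sep center (by simp) (by simp) (by simp)).symm
  · exact center_leaf j hj
  · exact sep center (by simp) (by simp) (by simp)
  · have hij : i ≠ j := by simpa using huv
    by_cases hi : i = 0
    · have hj : j ≠ 0 := hi ▸ hij.symm
      exact (sep (leaf j hj) (by simp) (by simp) (by simpa using hij)).symm
    · exact sep (leaf i hi) (by simp) (by simp) (by simpa using hij.symm)
  · exact sep center (by simp) (by simp) (by simp)
  · exact (center_leaf i hi).symm
  · exact (sep center (by simp) (by simp) (by simp)).symm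
  · exact sep (support i) (by simpa using hi) (by simp) (by simpa [eq_comm] using huv)

lemma iocNumber_graph (hk : 3 ≤ k) : iocNumber (graph k) = 2 * k - 1 := by
  have hcard : ({support 0}ᶜ : Finset (vertexSet k)).card = 2 * k - 1 := by
    rw [Finset.card_compl, Finset.card_singleton, ← card_option_fin_prod_bool_ne (some (0, true))]
    rfl
  have hIOC : IsIOC (graph k) ↑({support 0}ᶜ : Finset (vertexSet k)) := by
    simpa using isIOC_compl_support_zero hk
  refine (iocNumber_eq_card _ hIOC fun T hT => ?_).trans hcard
  refine Finset.card_le_card (Finset.coe_subset.mp ?_)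
  simpa using compl_support_zero_subset_of_isIOC hT

end ReducedSubdividedStar

/-- The reduced subdivided star `T_k*` is `T_k` with the leaf `some (0, true)` removed. -/
theorem stmt1 (k : ℕ) (hk : 3 ≤ k) :
    Fintype.card ({x : Option (Fin k × Bool) // x ≠ some (⟨0, by omega⟩, true)}) = 2 * k ∧
    iocNumber ((subdividedStar k).induce
      {x : Option (Fin k × Bool) | x ≠ some (⟨0, by omega⟩, true)}) = 2 * k - 1 := by
  have : NeZero k := ⟨by omega⟩
  exact ⟨card_option_fin_prod_bool_ne _, ReducedSubdividedStar.iocNumber_graph hk⟩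
end

section
/- For every Δ ≥ 3, the tree T obtained by taking two vertex-disjoint copies T_1, T_2 of the reduced subdivided star T_Δ* and joining the leaf neighbor of the central vertex of T_1 to the leaf neighbor of the central vertex of T_2 by an edge, which has order n = 4Δ, satisfies γ^IOC(T) = 4Δ − 2 = ((2Δ−1)/(2Δ))·n. -/
/-- Two disjoint copies of the reduced subdivided star `T_Δ*` joined by an edge between
the leaf neighbors of the two central vertices. In each copy (indexed by `Bool`),
vertex `0` is the central vertex, vertex `1` is its leaf neighbor `u_j`, and for
`1 ≤ i ≤ Δ - 1` vertex `2*i` is a support vertex with leaf `2*i + 1`. -/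
def doubleReducedStar (Δ : ℕ) : SimpleGraph (Bool × Fin (2 * Δ)) :=
  SimpleGraph.fromRel (fun a b =>
    (a.1 = b.1 ∧ (a.2 : ℕ) = 0 ∧
      ((b.2 : ℕ) = 1 ∨ ∃ i, 1 ≤ i ∧ i ≤ Δ - 1 ∧ (b.2 : ℕ) = 2 * i)) ∨
    (a.1 = b.1 ∧ ∃ i, 1 ≤ i ∧ i ≤ Δ - 1 ∧ (a.2 : ℕ) = 2 * i ∧ (b.2 : ℕ) = 2 * i + 1) ∨
    (a.1 ≠ b.1 ∧ (a.2 : ℕ) = 1 ∧ (b.2 : ℕ) = 1))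

/-!
For the lower bound, consider a vertex `c` together with the far ends `b` of all paths
`c - s - b` through vertices `s` of degree two: at most one of these vertices lies outside an
identifying open code `S`, and every support vertex (neighbour of a leaf) lies in `S`. In `T`
the non-support vertices split into two such families, one around each central vertex
`(p, 0)`: it consists of `(p, 0)`, the leaves of copy `p` and the vertex `u` of the other copy.
So `S` misses at most two vertices.

For the upper bound, omitting the leaf `(p, 3)` of each copy leaves an identifying open code:
two distinct vertices with a common neighbour are always told apart by another vertex.
-/

namespace IsIOC

variable {V : Type*} {G : SimpleGraph V} {S : Set V}

theorem mem_of_neighborSet_eq_singleton (hS : IsIOC G S) {v w : V}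
    (hv : G.neighborSet v = {w}) : w ∈ S := by
  obtain ⟨u, huS, hvu⟩ := hS.1 v
  have hu : u ∈ ({w} : Set V) := hv ▸ hvu
  exact hu ▸ huS

theorem mem_or_mem_of_neighborSet_eq_pair (hS : IsIOC G S) {v a b : V}
    (hv : G.neighborSet v = {a, b}) : a ∈ S ∨ b ∈ S := by
  obtain ⟨u, huS, hvu⟩ := hS.1 v
  have hu : u ∈ ({a, b} : Set V) := hv ▸ hvu
  rcases hu with rfl | rfl
  · exact .inl huS
  · exact .inr huS

theorem diff_subsingleton (hS : IsIOC G S) {c : V} {B : Set V}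
    (hB : ∀ b ∈ B, b ≠ c → ∃ s, G.neighborSet s = {c, b}) : (B \ S).Subsingleton := by
  have hc : ∀ b ∈ B, b ≠ c → c ∈ S ∨ b ∈ S := fun b hb hbc => by
    obtain ⟨s, hs⟩ := hB b hb hbc
    exact hS.mem_or_mem_of_neighborSet_eq_pair hs
  rintro x ⟨hxB, hxS⟩ y ⟨hyB, hyS⟩
  by_contra hxy
  by_cases hxc : x = c
  · subst hxc
    exact (hc y hyB (Ne.symm hxy)).elim hxS hyS
  by_cases hyc : y = c
  · subst hyc
    exact (hc x hxB hxc).elim hyS hxS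
  obtain ⟨s, hs⟩ := hB x hxB hxc
  obtain ⟨t, ht⟩ := hB y hyB hyc
  -- With `x, y ∉ S`, both `s` and `t` see only `c` in `S`.
  refine hS.2 s t ?_ ?_
  · rintro rfl
    have hx : x ∈ ({c, y} : Set V) := ht ▸ hs ▸ Set.mem_insert_of_mem c rfl
    exact hx.elim hxc hxy
  · rw [hs, ht, Set.pair_comm, Set.pair_comm c, Set.insert_inter_of_notMem hxS,
      Set.insert_inter_of_notMem hyS]

theorem of_forall_common_neighbor (hdom : ∀ v, ∃ u ∈ S, G.Adj v u)
    (hsep : ∀ z ∈ S, ∀ x y, G.Adj z x → G.Adj z y → x ≠ y →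
      ∃ w ∈ S, ¬(G.Adj x w ↔ G.Adj y w)) : IsIOC G S := by
  refine ⟨hdom, fun x y hxy htrace => ?_⟩
  have hS_adj : ∀ w ∈ S, (G.Adj x w ↔ G.Adj y w) := fun w hw =>
    ⟨fun h => (Set.ext_iff.1 htrace w |>.1 ⟨h, hw⟩).1,
      fun h => (Set.ext_iff.1 htrace w |>.2 ⟨h, hw⟩).1⟩
  obtain ⟨z, hzS, hxz⟩ := hdom x
  obtain ⟨w, hwS, hw⟩ := hsep z hzS x y hxz.symm ((hS_adj z hzS).1 hxz).symm hxy
  exact hw (hS_adj w hwS)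

end IsIOC

theorem iocNumber_eq_of_isIOC {V : Type*} [Fintype V] {G : SimpleGraph V} {S : Finset V}
    (hS : IsIOC G S) (hmin : ∀ T : Finset V, IsIOC G T → S.card ≤ T.card) :
    iocNumber G = S.card :=
  le_antisymm (Nat.sInf_le ⟨S, hS, rfl⟩)
    (le_csInf ⟨_, S, hS, rfl⟩ fun _ ⟨T, hT, hn⟩ => hn ▸ hmin T hT)

/-- The edges inside one copy of `T_Δ*` in the labelling of `doubleReducedStar`, directed away
from the centre `0`. -/
def starArc (k m : ℕ) : Prop :=
  (k = 0 ∧ (m = 1 ∨ (2 ≤ m ∧ m % 2 = 0))) ∨ (2 ≤ k ∧ k % 2 = 0 ∧ m = k + 1)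

namespace doubleReducedStar

variable {Δ : ℕ}

theorem card_vertices (Δ : ℕ) : Fintype.card (Bool × Fin (2 * Δ)) = 4 * Δ := by
  simp only [Fintype.card_prod, Fintype.card_bool, Fintype.card_fin]
  ring

theorem adj_iff {v w : Bool × Fin (2 * Δ)} :
    (doubleReducedStar Δ).Adj v w ↔
      (v.1 = w.1 ∧ (starArc v.2 w.2 ∨ starArc w.2 v.2)) ∨
        (v.1 ≠ w.1 ∧ (v.2 : ℕ) = 1 ∧ (w.2 : ℕ) = 1) := by
  obtain ⟨p, k, hk⟩ := v
  obtain ⟨q, m, hm⟩ := w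
  have hsupport : ∀ n < 2 * Δ, (∃ i, 1 ≤ i ∧ i ≤ Δ - 1 ∧ n = 2 * i) ↔ 2 ≤ n ∧ n % 2 = 0 :=
    fun n hn => ⟨fun ⟨i, _, _, hi⟩ => by omega, fun _ => ⟨n / 2, by omega, by omega, by omega⟩⟩
  have hleaf : ∀ n n', n < 2 * Δ →
      ((∃ i, 1 ≤ i ∧ i ≤ Δ - 1 ∧ n = 2 * i ∧ n' = 2 * i + 1) ↔ 2 ≤ n ∧ n % 2 = 0 ∧ n' = n + 1) :=
    fun n n' hn => ⟨fun ⟨i, _, _, hi, _⟩ => by omega, fun _ => ⟨n / 2, by omega, by omega, by omega⟩⟩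
  simp only [doubleReducedStar, SimpleGraph.fromRel_adj, hsupport m hm, hsupport k hk,
    hleaf k m hk, hleaf m k hm, starArc, ne_eq, Prod.ext_iff, Fin.ext_iff]
  cases p <;> cases q <;> simp <;> omega

theorem neighborSet_center (p : Bool) (h : 0 < 2 * Δ) :
    (doubleReducedStar Δ).neighborSet (p, ⟨0, h⟩) =
      {v | v.1 = p ∧ ((v.2 : ℕ) = 1 ∨ (2 ≤ (v.2 : ℕ) ∧ (v.2 : ℕ) % 2 = 0))} := by
  ext ⟨q, m, hm⟩
  simp only [SimpleGraph.mem_neighborSet, adj_iff, starArc]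
  cases p <;> cases q <;> simp

theorem neighborSet_hub (p : Bool) (h : 1 < 2 * Δ) :
    (doubleReducedStar Δ).neighborSet (p, ⟨1, h⟩) = {(p, ⟨0, by omega⟩), (!p, ⟨1, h⟩)} := by
  ext ⟨q, m, hm⟩
  simp only [SimpleGraph.mem_neighborSet, adj_iff, starArc, Set.mem_insert_iff,
    Set.mem_singleton_iff, Prod.ext_iff, Fin.ext_iff]
  cases p <;> cases q <;> simp

theorem neighborSet_support (p : Bool) {k : ℕ} (hk : k < 2 * Δ) (h2 : 2 ≤ k) (he : k % 2 = 0) :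
    (doubleReducedStar Δ).neighborSet (p, ⟨k, hk⟩) =
      {(p, ⟨0, by omega⟩), (p, ⟨k + 1, by omega⟩)} := by
  ext ⟨q, m, hm⟩
  simp only [SimpleGraph.mem_neighborSet, adj_iff, starArc, Set.mem_insert_iff,
    Set.mem_singleton_iff, Prod.ext_iff, Fin.ext_iff]
  cases p <;> cases q <;> simp <;> omega

theorem neighborSet_leaf (p : Bool) {k : ℕ} (hk : k + 1 < 2 * Δ) (h2 : 2 ≤ k) (he : k % 2 = 0) :
    (doubleReducedStar Δ).neighborSet (p, ⟨k + 1, hk⟩) = {(p, ⟨k, by omega⟩)} := by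
  ext ⟨q, m, hm⟩
  simp only [SimpleGraph.mem_neighborSet, adj_iff, starArc, Set.mem_singleton_iff,
    Prod.ext_iff, Fin.ext_iff]
  cases p <;> cases q <;> simp <;> omega

theorem support_mem_of_isIOC {S : Set (Bool × Fin (2 * Δ))}
    (hS : IsIOC (doubleReducedStar Δ) S) {p : Bool} {k : ℕ} (hk : k < 2 * Δ) (h2 : 2 ≤ k)
    (he : k % 2 = 0) : (p, ⟨k, hk⟩) ∈ S :=
  hS.mem_of_neighborSet_eq_singleton (neighborSet_leaf p (by omega) h2 he)

/-- Block `p` consists of `(p, 0)`, `(!p, 1)` and the leaves of copy `p`; support vertices are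
assigned to a block too, but they lie in every identifying open code. -/
def block (v : Bool × Fin (2 * Δ)) : Bool := if (v.2 : ℕ) = 1 then !v.1 else v.1

theorem diff_block_subsingleton {S : Set (Bool × Fin (2 * Δ))}
    (hS : IsIOC (doubleReducedStar Δ) S) (p : Bool) :
    ({v | block v = p} \ S).Subsingleton := by
  rintro x hx y hy
  refine hS.diff_subsingleton (c := (p, ⟨0, x.2.pos⟩)) ?_ ⟨hx, hx.2⟩ ⟨hy, hy.2⟩
  rintro ⟨q, k, hk⟩ ⟨hqp, hkS⟩ hc
  change (if k = 1 then !q else q) = p at hqp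
  have hsupport : ¬(2 ≤ k ∧ k % 2 = 0) := fun ⟨h2, he⟩ => hkS (support_mem_of_isIOC hS hk h2 he)
  rcases (by omega : k = 0 ∨ k = 1 ∨ 3 ≤ k) with rfl | rfl | hk3
  · simp_all
  · refine ⟨(p, ⟨1, hk⟩), ?_⟩
    rw [neighborSet_hub, ← hqp]
    simp
  · obtain ⟨j, rfl⟩ : ∃ j, k = j + 1 := ⟨k - 1, by omega⟩
    rw [if_neg (by omega)] at hqp
    subst hqp
    exact ⟨(q, ⟨j, by omega⟩), neighborSet_support q _ (by omega) (by omega)⟩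

theorem card_compl_le_two {S : Finset (Bool × Fin (2 * Δ))}
    (hS : IsIOC (doubleReducedStar Δ) S) : Sᶜ.card ≤ 2 :=
  calc Sᶜ.card ≤ (Finset.univ : Finset Bool).card :=
        Finset.card_le_card_of_injOn block (fun _ _ => Finset.mem_univ _) fun x hx y hy hxy =>
          diff_block_subsingleton hS (block x) ⟨rfl, by simpa using hx⟩
            ⟨hxy.symm, by simpa using hy⟩
    _ = 2 := rfl

theorem le_card_of_isIOC {S : Finset (Bool × Fin (2 * Δ))}
    (hS : IsIOC (doubleReducedStar Δ) S) : 4 * Δ - 2 ≤ S.card := by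
  have := card_compl_le_two hS
  rw [Finset.card_compl, card_vertices] at this
  omega

def code (Δ : ℕ) : Finset (Bool × Fin (2 * Δ)) :=
  Finset.univ.filter fun v => (v.2 : ℕ) ≠ 3

theorem card_code (hΔ : 2 ≤ Δ) : (code Δ).card = 4 * Δ - 2 := by
  have hcompl : (code Δ)ᶜ = {(false, ⟨3, by omega⟩), (true, ⟨3, by omega⟩)} := by
    ext ⟨p, k, hk⟩
    cases p <;> simp [code, Fin.ext_iff]
  have := Finset.card_compl (code Δ)
  rw [hcompl, card_vertices, Finset.card_pair (by simp)] at this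
  omega

theorem exists_code_adj (v : Bool × Fin (2 * Δ)) :
    ∃ u ∈ code Δ, (doubleReducedStar Δ).Adj v u := by
  obtain ⟨p, k, hk⟩ := v
  rcases (by omega : k = 0 ∨ k = 1 ∨ (2 ≤ k ∧ k % 2 = 0) ∨ (3 ≤ k ∧ k % 2 = 1))
    with rfl | rfl | hk' | hk'
  · exact ⟨(p, ⟨1, by omega⟩), by simp [code], by simp [adj_iff, starArc]⟩
  · exact ⟨(p, ⟨0, by omega⟩), by simp [code], by simp [adj_iff, starArc]⟩
  · exact ⟨(p, ⟨0, by omega⟩), by simp [code], by simp [adj_iff, starArc]; omega⟩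
  · exact ⟨(p, ⟨k - 1, by omega⟩), by simp [code]; omega, by simp [adj_iff, starArc]; omega⟩

theorem exists_code_separator (hΔ : 2 ≤ Δ) {z x y : Bool × Fin (2 * Δ)}
    (hx : (doubleReducedStar Δ).Adj z x) (hy : (doubleReducedStar Δ).Adj z y) (hxy : x ≠ y) :
    ∃ w ∈ code Δ, ¬((doubleReducedStar Δ).Adj x w ↔ (doubleReducedStar Δ).Adj y w) := by
  obtain ⟨p, m, hm⟩ := z
  rw [← SimpleGraph.mem_neighborSet] at hx hy
  rcases (by omega : m = 0 ∨ m = 1 ∨ (2 ≤ m ∧ m % 2 = 0) ∨ (3 ≤ m ∧ m % 2 = 1))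
    with rfl | rfl | ⟨h2, he⟩ | ⟨h3, ho⟩
  · rw [neighborSet_center] at hx hy
    obtain ⟨q, k, hk⟩ := x
    obtain ⟨r, l, hl⟩ := y
    obtain ⟨hq : q = p, hk'⟩ := hx
    obtain ⟨hr : r = p, hl'⟩ := hy
    subst q r
    simp only [ne_eq, Prod.mk.injEq, Fin.mk.injEq, true_and] at hxy hk' hl'
    -- Every neighbour of the centre except `(p, 2)` has a private neighbour in the code.
    by_cases h1 : k = 1 ∨ l = 1
    · refine ⟨(!p, ⟨1, by omega⟩), by simp [code], ?_⟩
      simp [adj_iff, starArc]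
      omega
    by_cases h4 : 4 ≤ k
    · refine ⟨(p, ⟨k + 1, by omega⟩), by simp [code]; omega, ?_⟩
      simp [adj_iff, starArc]
      omega
    · refine ⟨(p, ⟨l + 1, by omega⟩), by simp [code]; omega, ?_⟩
      simp [adj_iff, starArc]
      omega
  · rw [neighborSet_hub] at hx hy
    refine ⟨(p, ⟨2, by omega⟩), by simp [code], ?_⟩
    rcases hx with rfl | rfl <;> rcases hy with rfl | rfl <;> simp_all [adj_iff, starArc]
  · rw [neighborSet_support p hm h2 he] at hx hy
    refine ⟨(p, ⟨1, by omega⟩), by simp [code], ?_⟩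
    rcases hx with rfl | rfl <;> rcases hy with rfl | rfl <;> simp_all [adj_iff, starArc]
  · obtain ⟨j, rfl⟩ : ∃ j, m = j + 1 := ⟨m - 1, by omega⟩
    rw [neighborSet_leaf p hm (by omega) (by omega)] at hx hy
    exact absurd (hx.trans hy.symm) hxy

theorem isIOC_code (hΔ : 2 ≤ Δ) : IsIOC (doubleReducedStar Δ) (code Δ) :=
  .of_forall_common_neighbor exists_code_adj fun _ _ _ _ hx hy hxy =>
    exists_code_separator hΔ hx hy hxy

end doubleReducedStar

theorem stmt14 (Δ : ℕ) (hΔ : 3 ≤ Δ) :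
    Fintype.card (Bool × Fin (2 * Δ)) = 4 * Δ ∧
    iocNumber (doubleReducedStar Δ) = 4 * Δ - 2 := by
  have h2 : 2 ≤ Δ := by omega
  refine ⟨doubleReducedStar.card_vertices Δ, ?_⟩
  rw [← doubleReducedStar.card_code h2]
  exact iocNumber_eq_of_isIOC (doubleReducedStar.isIOC_code h2) fun _ hT =>
    (doubleReducedStar.card_code h2).trans_le (doubleReducedStar.le_card_of_isIOC hT)
end

section
/- In any tree T with at least 2 vertices, if S is an identifying open code of T, then S contains all support vertices of T, and S omits at most one leaf from each set of leaves adjacent to a common support vertex's neighborhood; in particular, for the subdivided star T_k (k ≥ 2), any IO-code contains all k support vertices and at least k−1 of the k outer leaves. -/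
/-! Total domination forces the unique neighbour of a leaf into the code. Two support vertices of
`T_k` share the centre as their only other neighbour, so separating them needs one of their two
leaves in the code; hence at most one leaf is missing. -/

variable {V : Type*} {G : SimpleGraph V} {S : Set V}

theorem IsIOC.mem_of_neighborSet_eq_singleton_s18 (hS : IsIOC G S) {u w : V}
    (hw : G.neighborSet w = {u}) : u ∈ S := by
  obtain ⟨x, hxS, hwx⟩ := hS.1 w
  have hx : x ∈ G.neighborSet w := hwx
  rw [hw, Set.mem_singleton_iff] at hx
  rwa [hx] at hxS

theorem IsIOC.mem_or_mem_of_neighborSet_eq_insert (hS : IsIOC G S) {u v x y : V} {A : Set V}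
    (huv : u ≠ v) (hu : G.neighborSet u = insert x A) (hv : G.neighborSet v = insert y A) :
    x ∈ S ∨ y ∈ S := by
  by_contra! hxy
  apply hS.2 u v huv
  rw [hu, hv, Set.insert_inter_of_notMem hxy.1, Set.insert_inter_of_notMem hxy.2]

theorem Finset.card_sub_one_le_card_filter {α : Type*} {s : Finset α} {p : α → Prop}
    [DecidablePred p] (h : ∀ a ∈ s, ∀ b ∈ s, a ≠ b → p a ∨ p b) :
    s.card - 1 ≤ (s.filter p).card := by
  have hfail : (s.filter (fun a => ¬ p a)).card ≤ 1 := by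
    refine Finset.card_le_one.mpr fun a ha b hb => ?_
    rw [Finset.mem_filter] at ha hb
    by_contra hab
    exact (h a ha.1 b hb.1 hab).elim ha.2 hb.2
  have := Finset.card_filter_add_card_filter_not (s := s) p
  omega

namespace subdividedStar

variable {k : ℕ} (i : Fin k)

theorem neighborSet_leaf :
    (subdividedStar k).neighborSet (some (i, true)) = {some (i, false)} := by
  ext x
  rcases x with _ | ⟨j, _ | _⟩ <;> simp [subdividedStar, eq_comm]

theorem neighborSet_support :
    (subdividedStar k).neighborSet (some (i, false)) = insert (some (i, true)) {none} := by
  ext x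
  rcases x with _ | ⟨j, _ | _⟩ <;> simp [subdividedStar, eq_comm]

end subdividedStar

theorem stmt18 :
    (∀ (V : Type) [Fintype V] (T : SimpleGraph V), T.IsTree → 2 ≤ Fintype.card V →
      ∀ S : Set V, IsIOC T S → ∀ u w : V, T.neighborSet w = {u} → u ∈ S) ∧
    (∀ k : ℕ, 2 ≤ k → ∀ S : Finset (Option (Fin k × Bool)),
      IsIOC (subdividedStar k) ↑S →
      (∀ i : Fin k, some (i, false) ∈ S) ∧
      k - 1 ≤ (Finset.univ.filter (fun i : Fin k => some (i, true) ∈ S)).card) := by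
  refine ⟨fun V _ T _ _ S hS u w hw => hS.mem_of_neighborSet_eq_singleton_s18 hw,
    fun k _ S hS => ⟨fun i => ?_, ?_⟩⟩
  · exact hS.mem_of_neighborSet_eq_singleton_s18 (subdividedStar.neighborSet_leaf i)
  · have hleaves := Finset.card_sub_one_le_card_filter (s := Finset.univ)
      (p := fun i : Fin k => some (i, true) ∈ S) fun i _ j _ hij =>
        hS.mem_or_mem_of_neighborSet_eq_insert (by simpa using hij)
          (subdividedStar.neighborSet_support i) (subdividedStar.neighborSet_support j)
    simpa using hleaves
end
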